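/- Let μ be a Borel probability measure on ℝ supported in [0,1] that is Rajchman, and suppose h : [1,∞) → (0,∞) is decreasing with h(t) → 0 and |μ̂(t)| ≤ h(t) for all t ≥ 1. If (tₙ) is a decreasing positive sequence with t_{n+1} ≤ tₙ/(2ⁿ Tₙ) where Tₙ ≥ max(2ⁿ, h⁻¹(2⁻ⁿ)), then sup_{s ∈ ℝ} Σ_{n=1}^∞ |λ̂₀(tₙ s) - μ̂(tₙ s)|² < ∞, where λ₀ is the uniform probability measure on [0,1]. -/

import Mathlib

/-!
Write `F(u) = |λ̂₀(u) - μ̂(u)|` and `a n = t n |s|`; since `F` is even the `n`-th term is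
`F(a n)²`. Both measures live on `[0, 1]`, so `F(u) ≤ 4π|u|`; and for `u ≥ T n` the decay
`|λ̂₀(u)| ≤ 2/u` together with `|μ̂(u)| ≤ h(u) ≤ h(T n) ≤ 2⁻ⁿ` gives `F(u) ≤ 3·2⁻ⁿ`.
The rate condition makes `a n < T n` propagate: it forces `a (n+1) < 2⁻ⁿ ≤ T (n+1)`.
So every index is either large (`a n ≥ T n`) or the successor of a non-large one, hence
small, except for the first non-large index, where we use `F ≤ 2`. Altogether the series is
dominated by a geometric series plus `4`, uniformly in `s`.
-/

open MeasureTheory Complex Real Set Filter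

section CharFun

variable {E : Type*} [NormedAddCommGroup E] [InnerProductSpace ℝ E] [MeasurableSpace E]
  {μ ν : Measure E}

lemma norm_charFun_sub_charFun_neg (t : E) :
    ‖charFun μ (-t) - charFun ν (-t)‖ = ‖charFun μ t - charFun ν t‖ := by
  rw [charFun_neg, charFun_neg, ← map_sub, RCLike.norm_conj]

variable [IsProbabilityMeasure μ] [IsProbabilityMeasure ν]

lemma norm_charFun_sub_charFun_le_two (t : E) : ‖charFun μ t - charFun ν t‖ ≤ 2 := by
  linarith [norm_sub_le (charFun μ t) (charFun ν t), norm_charFun_le_one (μ := μ) t,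
    norm_charFun_le_one (μ := ν) t]

variable [BorelSpace E]

lemma norm_charFun_sub_one_le {R : ℝ} (hR : ∀ᵐ x ∂μ, ‖x‖ ≤ R) (t : E) :
    ‖charFun μ t - 1‖ ≤ R * ‖t‖ := by
  have hint : Integrable (fun x ↦ cexp (inner ℝ x t * I)) μ :=
    (integrable_const (1 : ℝ)).mono' (by fun_prop)
      (ae_of_all _ fun x ↦ by simp [norm_exp_ofReal_mul_I])
  have hsub : charFun μ t - 1 = ∫ x, (cexp (inner ℝ x t * I) - 1) ∂μ := by
    rw [integral_sub hint (integrable_const 1)]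
    simp [charFun_apply]
  rw [hsub]
  refine (norm_integral_le_of_norm_le_const (C := R * ‖t‖) ?_).trans_eq (by simp)
  filter_upwards [hR] with x hx
  calc ‖cexp (inner ℝ x t * I) - 1‖ ≤ ‖inner ℝ x t‖ := by
        rw [mul_comm]; exact norm_exp_I_mul_ofReal_sub_one_le
    _ ≤ ‖x‖ * ‖t‖ := abs_real_inner_le_norm x t
    _ ≤ R * ‖t‖ := by gcongr

lemma norm_charFun_sub_charFun_le {R : ℝ} (hμ : ∀ᵐ x ∂μ, ‖x‖ ≤ R) (hν : ∀ᵐ x ∂ν, ‖x‖ ≤ R)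
    (t : E) : ‖charFun μ t - charFun ν t‖ ≤ 2 * R * ‖t‖ := by
  rw [← sub_sub_sub_cancel_right _ _ 1]
  linarith [norm_sub_le (charFun μ t - 1) (charFun ν t - 1), norm_charFun_sub_one_le hμ t,
    norm_charFun_sub_one_le hν t]

end CharFun

lemma norm_charFun_restrict_Icc_le {a b v : ℝ} (hab : a ≤ b) (hv : v ≠ 0) :
    ‖charFun (volume.restrict (Icc a b)) v‖ ≤ 2 / |v| := by
  have hvI : (v : ℂ) * I ≠ 0 := mul_ne_zero (ofReal_ne_zero.2 hv) I_ne_zero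
  have hcharFun : charFun (volume.restrict (Icc a b)) v =
      (cexp (v * I * b) - cexp (v * I * a)) / (v * I) := by
    rw [charFun_apply_real, integral_Icc_eq_integral_Ioc, ← intervalIntegral.integral_of_le hab,
      ← integral_exp_mul_complex hvI]
    simp only [mul_right_comm _ I]
  rw [hcharFun, norm_div, norm_mul, norm_I, mul_one, norm_real, Real.norm_eq_abs]
  gcongr
  refine (norm_sub_le _ _).trans ?_
  rw [mul_right_comm, mul_right_comm _ I, ← ofReal_mul, ← ofReal_mul, norm_exp_ofReal_mul_I,
    norm_exp_ofReal_mul_I]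
  norm_num

instance : IsProbabilityMeasure (volume.restrict (Icc (0 : ℝ) 1)) :=
  ⟨by simp⟩

lemma ae_norm_le_one_of_compl_Icc {μ : Measure ℝ} (hμ : μ (Icc 0 1)ᶜ = 0) :
    ∀ᵐ x ∂μ, ‖x‖ ≤ 1 := by
  filter_upwards [measure_eq_zero_iff_ae_notMem.1 hμ] with x hx
  simp only [mem_compl_iff, not_not] at hx
  exact abs_le.2 ⟨by linarith [hx.1], hx.2⟩

lemma integral_cexp_neg_two_pi_eq_charFun (ν : Measure ℝ) (u : ℝ) :
    ∫ x, cexp (-2 * π * I * u * x) ∂ν = charFun ν (-(2 * π * u)) := by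
  rw [charFun_apply_real]
  congr with x
  push_cast
  ring_nf

/-- `charFun ν (-(2 * π * u)) = ν̂(u) = ∫ exp(-2πiux) dν`, so this is `|λ̂₀(u) - μ̂(u)|`. -/
noncomputable def fourierGap (μ : Measure ℝ) (u : ℝ) : ℝ :=
  ‖charFun (volume.restrict (Icc 0 1)) (-(2 * π * u)) - charFun μ (-(2 * π * u))‖

lemma norm_integral_sub_integral_eq_fourierGap (μ : Measure ℝ) (u : ℝ) :
    ‖(∫ x in Icc (0 : ℝ) 1, cexp (-2 * π * I * u * x)) - ∫ x, cexp (-2 * π * I * u * x) ∂μ‖ =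
      fourierGap μ u := by
  simp only [integral_cexp_neg_two_pi_eq_charFun, fourierGap]

lemma fourierGap_neg (μ : Measure ℝ) (u : ℝ) : fourierGap μ (-u) = fourierGap μ u := by
  simp only [fourierGap, mul_neg, norm_charFun_sub_charFun_neg]

lemma fourierGap_abs (μ : Measure ℝ) (u : ℝ) : fourierGap μ |u| = fourierGap μ u := by
  rcases abs_choice u with h | h <;> simp only [h, fourierGap_neg]

lemma fourierGap_le_two (μ : Measure ℝ) [IsProbabilityMeasure μ] (u : ℝ) :
    fourierGap μ u ≤ 2 :=
  norm_charFun_sub_charFun_le_two _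

lemma fourierGap_le_mul_abs {μ : Measure ℝ} [IsProbabilityMeasure μ] (hμ : μ (Icc 0 1)ᶜ = 0)
    (u : ℝ) : fourierGap μ u ≤ 4 * π * |u| := by
  refine (norm_charFun_sub_charFun_le (ae_norm_le_one_of_compl_Icc (by simp))
    (ae_norm_le_one_of_compl_Icc hμ) _).trans_eq ?_
  rw [norm_neg, norm_mul, Real.norm_eq_abs, Real.norm_eq_abs, abs_of_pos two_pi_pos]
  ring

lemma fourierGap_le_of_pos (μ : Measure ℝ) {u : ℝ} (hu : 0 < u) :
    fourierGap μ u ≤ 2 / u + ‖∫ x, cexp (-2 * π * I * u * x) ∂μ‖ := by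
  rw [integral_cexp_neg_two_pi_eq_charFun]
  refine (norm_sub_le _ _).trans (add_le_add_left ?_ _)
  refine (norm_charFun_restrict_Icc_le zero_le_one (neg_ne_zero.2 (by positivity))).trans ?_
  rw [abs_neg, abs_of_pos (by positivity)]
  gcongr
  nlinarith [pi_gt_three]

lemma Nat.exists_forall_ne_of_monotone {P Q : ℕ → Prop} (hP : Monotone P)
    (hQ : ∀ n, ¬P n → Q n) (hQ_succ : ∀ n, P n → Q (n + 1)) : ∃ N, ∀ n ≠ N, Q n := by
  classical
  by_cases hex : ∃ n, P n
  · refine ⟨Nat.find hex, fun n hn ↦ ?_⟩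
    rcases hn.lt_or_gt with hlt | hgt
    · exact hQ n (Nat.find_min hex hlt)
    · obtain ⟨m, rfl⟩ := Nat.exists_eq_add_of_lt hgt
      exact hQ_succ _ (hP (by omega) (Nat.find_spec hex))
  · exact ⟨0, fun n _ ↦ hQ n (not_exists.1 hex n)⟩

lemma tsum_le_tsum_add_of_forall_ne_le {ι : Type*} {a g : ι → ℝ} {B : ℝ} (N : ι)
    (hg : Summable g) (ha0 : ∀ n, 0 ≤ a n) (haN : a N ≤ g N + B) (ha : ∀ n ≠ N, a n ≤ g n) :
    ∑' n, a n ≤ ∑' n, g n + B := by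
  classical
  have hle : ∀ n, a n ≤ g n + (Pi.single N B : ι → ℝ) n := by
    intro n
    by_cases hn : n = N
    · subst hn; simpa using haN
    · simpa [Pi.single_apply, hn] using ha n hn
  have hsum : Summable fun n ↦ g n + (Pi.single N B : ι → ℝ) n :=
    hg.add (hasSum_pi_single N B).summable
  calc ∑' n, a n ≤ ∑' n, (g n + (Pi.single N B : ι → ℝ) n) :=
        (hsum.of_nonneg_of_le ha0 hle).tsum_le_tsum hle hsum
    _ = ∑' n, g n + B := by rw [hg.tsum_add (hasSum_pi_single N B).summable, tsum_pi_single]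

lemma tsum_sq_le_of_rapid_decay {F : ℝ → ℝ} {a T : ℕ → ℝ} {c C M : ℝ}
    (hF0 : ∀ u, 0 ≤ F u) (hFM : ∀ u, F u ≤ M) (hF_small : ∀ u, 0 ≤ u → F u ≤ c * u)
    (hF_large : ∀ n u, T n ≤ u → F u ≤ C * 2⁻¹ ^ n)
    (ha0 : ∀ n, 0 ≤ a n) (hT : ∀ n, 2 ^ n ≤ T n) (ha : ∀ n, a (n + 1) ≤ a n / (2 ^ n * T n)) :
    ∑' n, F (a n) ^ 2 ≤ (4 * c ^ 2 + C ^ 2) * (4 / 3) + M ^ 2 := by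
  have hc : 0 ≤ c := by simpa using (hF0 1).trans (hF_small 1 zero_le_one)
  have hT0 n : 0 < T n := (pow_pos two_pos n).trans_le (hT n)
  have hsq n : ((2 : ℝ)⁻¹ ^ n) ^ 2 = 4⁻¹ ^ n := by rw [← pow_mul, mul_comm, pow_mul]; norm_num
  have hnext n (hn : a n < T n) : a (n + 1) < 2⁻¹ ^ n := by
    calc a (n + 1) ≤ a n / (2 ^ n * T n) := ha n
      _ < T n / (2 ^ n * T n) := by gcongr; exact mul_pos (pow_pos two_pos n) (hT0 n)
      _ = 2⁻¹ ^ n := by rw [inv_pow, mul_comm, ← div_div, div_self (hT0 n).ne', one_div]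
  have hmono : Monotone fun n ↦ a n < T n := by
    refine monotone_nat_of_le_succ fun n hn ↦ (hnext n hn).trans_le ?_
    calc (2 : ℝ)⁻¹ ^ n ≤ 1 := pow_le_one₀ (by norm_num) (by norm_num)
      _ ≤ 2 ^ (n + 1) := one_le_pow₀ one_le_two
      _ ≤ T (n + 1) := hT _
  set K := 4 * c ^ 2 + C ^ 2
  have hlarge n (hn : ¬a n < T n) : F (a n) ^ 2 ≤ K * 4⁻¹ ^ n := by
    calc F (a n) ^ 2 ≤ (C * 2⁻¹ ^ n) ^ 2 := by gcongr; exacts [hF0 _, hF_large n _ (not_lt.1 hn)]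
      _ = C ^ 2 * 4⁻¹ ^ n := by rw [mul_pow, hsq]
      _ ≤ K * 4⁻¹ ^ n := by gcongr; linarith [sq_nonneg c]
  have hsmall n (hn : a n < T n) : F (a (n + 1)) ^ 2 ≤ K * 4⁻¹ ^ (n + 1) := by
    calc F (a (n + 1)) ^ 2 ≤ (c * 2⁻¹ ^ n) ^ 2 := by
          gcongr
          · exact hF0 _
          · exact (hF_small _ (ha0 _)).trans (by gcongr; exact (hnext n hn).le)
      _ = 4 * c ^ 2 * 4⁻¹ ^ (n + 1) := by rw [mul_pow, hsq, pow_succ]; ring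
      _ ≤ K * 4⁻¹ ^ (n + 1) := by gcongr; linarith [sq_nonneg C]
  obtain ⟨N, hN⟩ := Nat.exists_forall_ne_of_monotone hmono hlarge hsmall
  have hgeom : Summable fun n : ℕ ↦ K * (4 : ℝ)⁻¹ ^ n :=
    (summable_geometric_of_lt_one (by norm_num) (by norm_num)).mul_left K
  have hFN : F (a N) ^ 2 ≤ K * 4⁻¹ ^ N + M ^ 2 := by
    have : F (a N) ^ 2 ≤ M ^ 2 := by gcongr; exacts [hF0 _, hFM _]
    have : 0 ≤ K * (4 : ℝ)⁻¹ ^ N := by positivity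
    linarith
  calc ∑' n, F (a n) ^ 2 ≤ ∑' n, K * (4 : ℝ)⁻¹ ^ n + M ^ 2 :=
        tsum_le_tsum_add_of_forall_ne_le N hgeom (fun n ↦ sq_nonneg _) hFN hN
    _ = K * (4 / 3) + M ^ 2 := by
        rw [tsum_mul_left, tsum_geometric_of_lt_one (by norm_num) (by norm_num)]; norm_num

theorem explicit_rate_square_bound_general
    (μ : Measure ℝ) [IsProbabilityMeasure μ]
    (hsupp : μ (Icc (0:ℝ) 1)ᶜ = 0)
    (h : ℝ → ℝ)
    (hh_anti : ∀ u v : ℝ, 1 ≤ u → u ≤ v → h v ≤ h u)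
    (hμh : ∀ u : ℝ, 1 ≤ u →
      ‖∫ x : ℝ, Complex.exp (-2 * π * I * u * x) ∂μ‖ ≤ h u)
    (t : ℕ → ℝ) (ht_pos : ∀ n, 0 < t n)
    (T : ℕ → ℝ)
    (hT : ∀ n, (2:ℝ) ^ n ≤ T n ∧ h (T n) ≤ (2:ℝ)⁻¹ ^ n)
    (ht_rate : ∀ n, t (n + 1) ≤ t n / ((2:ℝ) ^ n * T n)) :
    ∃ C : ℝ, ∀ s : ℝ,
      (∑' n : ℕ,
        ‖(∫ x : ℝ in Icc (0:ℝ) 1, Complex.exp (-2 * π * I * (t n * s) * x)) -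
          (∫ x : ℝ, Complex.exp (-2 * π * I * (t n * s) * x) ∂μ)‖ ^ 2) ≤ C := by
  have hF_large n u (hu : T n ≤ u) : fourierGap μ u ≤ 3 * 2⁻¹ ^ n := by
    have hT1 : 1 ≤ T n := (one_le_pow₀ one_le_two).trans (hT n).1
    calc fourierGap μ u ≤ 2 / u + h (T n) :=
          (fourierGap_le_of_pos μ (by linarith)).trans (add_le_add le_rfl
            ((hμh u (hT1.trans hu)).trans (hh_anti _ _ hT1 hu)))
      _ ≤ 2 / 2 ^ n + 2⁻¹ ^ n := by gcongr; exacts [(hT n).1.trans hu, (hT n).2]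
      _ = 3 * 2⁻¹ ^ n := by rw [div_eq_mul_inv, ← inv_pow]; ring
  refine ⟨(4 * (4 * π) ^ 2 + 3 ^ 2) * (4 / 3) + 2 ^ 2, fun s ↦ ?_⟩
  simp only [← ofReal_mul, norm_integral_sub_integral_eq_fourierGap]
  simp only [← fourierGap_abs μ (_ * s), abs_mul, abs_of_pos (ht_pos _)]
  refine tsum_sq_le_of_rapid_decay (fun _ ↦ norm_nonneg _) (fourierGap_le_two μ)
    (fun u hu ↦ (fourierGap_le_mul_abs hsupp u).trans_eq (by rw [abs_of_nonneg hu]))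
    hF_large (fun n ↦ mul_nonneg (ht_pos n).le (abs_nonneg s)) (fun n ↦ (hT n).1) fun n ↦ ?_
  rw [mul_div_right_comm]
  exact mul_le_mul_of_nonneg_right (ht_rate n) (abs_nonneg s)

theorem explicit_rate_square_bound
    (μ : Measure ℝ) [IsProbabilityMeasure μ]
    (hsupp : μ (Icc (0:ℝ) 1)ᶜ = 0)
    (hRajchman : Tendsto (fun s : ℝ =>
        ∫ x : ℝ, Complex.exp (-2 * π * I * s * x) ∂μ) (cocompact ℝ) (nhds 0))
    (h : ℝ → ℝ) (hh_pos : ∀ u : ℝ, 1 ≤ u → 0 < h u)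
    (hh_anti : ∀ u v : ℝ, 1 ≤ u → u ≤ v → h v ≤ h u)
    (hh_lim : Tendsto h atTop (nhds 0))
    (hμh : ∀ u : ℝ, 1 ≤ u →
      ‖∫ x : ℝ, Complex.exp (-2 * π * I * u * x) ∂μ‖ ≤ h u)
    (t : ℕ → ℝ) (ht_pos : ∀ n, 0 < t n) (ht_dec : ∀ n, t (n + 1) ≤ t n)
    (T : ℕ → ℝ)
    (hT : ∀ n, (2:ℝ) ^ n ≤ T n ∧ h (T n) ≤ (2:ℝ)⁻¹ ^ n)
    (ht_rate : ∀ n, t (n + 1) ≤ t n / ((2:ℝ) ^ n * T n)) :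
    ∃ C : ℝ, ∀ s : ℝ,
      (∑' n : ℕ,
        ‖(∫ x : ℝ in Icc (0:ℝ) 1, Complex.exp (-2 * π * I * (t n * s) * x)) -
          (∫ x : ℝ, Complex.exp (-2 * π * I * (t n * s) * x) ∂μ)‖ ^ 2) ≤ C :=
  explicit_rate_square_bound_general μ hsupp h hh_anti hμh t ht_pos T hT ht_rate
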